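/- Let t be a positive integer, k > 0 a real number, and ρ a real number with 1 < ρ < t. Then there is a unique p = (p_1,…,p_t) ∈ P̃_{ρ,t} maximizing L̃(ρ,k,p), given by p_i = e^{x+iy}·d_i^{−1} for 1 ≤ i ≤ t, where x = x_t(ρ) and y = y_t(ρ) are (the unique) reals satisfying Σ_{i=1}^t e^{x+iy} d_i^{−1} = 1 and Σ_{i=1}^t i·e^{x+iy} d_i^{−1} = ρ. Furthermore, L̃₀(ρ,k,t) = ρ log(ρk) − log k − ρ + 1 − x − ρy. -/

import Mathlib

open Filter Real

/-- `d_i = 2^C(i,2) i!`. -/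
noncomputable def dI (i : ℕ) : ℝ := 2 ^ i.choose 2 * (i.factorial : ℝ)

/-- `P̃_{ρ,t}`: the set of `(p_1,…,p_t) ∈ [0,1]^t` with `Σ p_i = 1` and `Σ i p_i = ρ`
(index `i : Fin t` denotes size `i+1`). -/
def Ptilde (ρ : ℝ) (t : ℕ) : Set (Fin t → ℝ) :=
  {q | (∀ i, q i ∈ Set.Icc (0 : ℝ) 1) ∧ (∑ i, q i) = 1 ∧
    (∑ i, ((i.1 + 1 : ℕ) : ℝ) * q i) = ρ}

/-- `L̃(ρ,k,p) = ρ log(ρk) − log k − ρ + 1 − Σ p_i log(p_i d_i)`. -/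
noncomputable def Ltilde (ρ k : ℝ) {t : ℕ} (q : Fin t → ℝ) : ℝ :=
  ρ * Real.log (ρ * k) - Real.log k - ρ + 1 -
    ∑ i, q i * Real.log (q i * dI (i.1 + 1))

/-- `L̃₀(ρ,k,t) = sup {L̃(ρ,k,p) : p ∈ P̃_{ρ,t}}`. -/
noncomputable def Ltilde0 (ρ k : ℝ) (t : ℕ) : ℝ :=
  sSup {L : ℝ | ∃ q ∈ Ptilde ρ t, L = Ltilde ρ k q}

/-- `L̂₀(n,k,t) = L̃₀(n/k, k, t)`. -/
noncomputable def Lhat0 (n k : ℝ) (t : ℕ) : ℝ := Ltilde0 (n / k) k t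


lemma dI_pos (i : ℕ) : 0 < dI i := by
  have : 0 < (i.factorial : ℝ) := by exact_mod_cast i.factorial_pos
  unfold dI; positivity

lemma entropy_term {p q : ℝ} (hp : 0 < p) (hq : 0 ≤ q) :
    q * Real.log p + (q - p) ≤ q * Real.log q ∧
      (q * Real.log p + (q - p) = q * Real.log q → q = p) := by
  rcases hq.eq_or_lt with h | h
  · refine ⟨by rw [← h]; simp; linarith, fun heq => ?_⟩
    rw [← h] at heq; simp at heq; exfalso; linarith
  · have hpq : 0 < p / q := div_pos hp h
    have h1 : Real.log (p / q) ≤ p / q - 1 := Real.log_le_sub_one_of_pos hpq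
    have hlog : Real.log (p / q) = Real.log p - Real.log q := Real.log_div hp.ne' h.ne'
    have h3 : q * (p / q) = p := by field_simp
    have h2 : q * Real.log (p / q) ≤ q * (p / q - 1) := mul_le_mul_of_nonneg_left h1 h.le
    constructor
    · nlinarith [h2, h3, hlog]
    · intro heq
      by_contra hne
      have hne1 : p / q ≠ 1 := by
        intro hh
        rw [div_eq_one_iff_eq h.ne'] at hh
        exact hne hh.symm
      have h1' : Real.log (p / q) < p / q - 1 := Real.log_lt_sub_one_of_pos hpq hne1
      have h2' : q * Real.log (p / q) < q * (p / q - 1) := by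
        exact mul_lt_mul_of_pos_left h1' h
      nlinarith [h2', h3, hlog]

lemma term_mono {c d : ℝ} (hd : 0 < d) {y₁ y₂ : ℝ} (h : y₁ ≤ y₂) :
    c * Real.exp (c * y₁) / d ≤ c * Real.exp (c * y₂) / d := by
  apply (div_le_div_iff_of_pos_right hd).mpr
  rcases le_or_gt 0 c with hc | hc
  · exact mul_le_mul_of_nonneg_left (Real.exp_le_exp.mpr (mul_le_mul_of_nonneg_left h hc)) hc
  · exact mul_le_mul_of_nonpos_left (Real.exp_le_exp.mpr (mul_le_mul_of_nonpos_left h hc.le)) hc.le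

lemma term_strict {c d : ℝ} (hd : 0 < d) (hc : c < 0) {y₁ y₂ : ℝ} (h : y₁ < y₂) :
    c * Real.exp (c * y₁) / d < c * Real.exp (c * y₂) / d := by
  apply (div_lt_div_iff_of_pos_right hd).mpr
  exact mul_lt_mul_of_neg_left (Real.exp_lt_exp.mpr (mul_lt_mul_of_neg_left h hc)) hc

lemma term_upper {c d m y : ℝ} (hd : 0 < d) (hy : y ≤ 0) (hc : c ≤ m) (hm0 : 0 ≤ m) :
    c * Real.exp (c * y) / d ≤ m / d := by
  apply (div_le_div_iff_of_pos_right hd).mpr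
  rcases le_or_gt c 0 with h | h
  · have : c * Real.exp (c * y) ≤ 0 := mul_nonpos_of_nonpos_of_nonneg h (Real.exp_pos _).le
    linarith
  · have h1 : Real.exp (c * y) ≤ 1 := Real.exp_le_one_iff.mpr (mul_nonpos_of_nonneg_of_nonpos h.le hy)
    nlinarith

lemma term_lower {c d m y : ℝ} (hd : 0 < d) (hy : 0 ≤ y) (hc : -m ≤ c) (hm0 : 0 ≤ m) :
    -(m / d) ≤ c * Real.exp (c * y) / d := by
  rw [← neg_div]
  apply (div_le_div_iff_of_pos_right hd).mpr
  rcases le_or_gt 0 c with h | h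
  · have : 0 ≤ c * Real.exp (c * y) := mul_nonneg h (Real.exp_pos _).le
    linarith
  · have h1 : Real.exp (c * y) ≤ 1 := Real.exp_le_one_iff.mpr (mul_nonpos_of_nonpos_of_nonneg h.le hy)
    nlinarith [Real.exp_pos (c * y)]

noncomputable def Gfun (t : ℕ) (ρ : ℝ) (y : ℝ) : ℝ :=
  ∑ i : Fin t, (((i.1 + 1 : ℕ) : ℝ) - ρ) * Real.exp ((((i.1 + 1 : ℕ) : ℝ) - ρ) * y) / dI (i.1 + 1)

lemma Gfun_strictMono (t : ℕ) (ht : 0 < t) (ρ : ℝ) (hρ1 : 1 < ρ) : StrictMono (Gfun t ρ) := by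
  intro y₁ y₂ h
  unfold Gfun
  apply Finset.sum_lt_sum
  · intro i _; exact term_mono (dI_pos _) h.le
  · refine ⟨⟨0, ht⟩, Finset.mem_univ _, ?_⟩
    have : (((0 : ℕ) + 1 : ℕ) : ℝ) - ρ < 0 := by push_cast; linarith
    exact term_strict (dI_pos _) this h

lemma Gfun_cont (t : ℕ) (ρ : ℝ) : Continuous (Gfun t ρ) := by
  unfold Gfun
  apply continuous_finset_sum
  intro i _
  exact (continuous_const.mul (Real.continuous_exp.comp (continuous_const.mul continuous_id))).div_const _

lemma Gfun_zero (t : ℕ) (ht : 0 < t) (ρ : ℝ) (hρ1 : 1 < ρ) (hρt : ρ < (t : ℝ)) :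
    ∃ y, Gfun t ρ y = 0 := by
  have hρ0 : (0 : ℝ) < ρ := by linarith
  -- lower side
  set i0 : Fin t := ⟨0, ht⟩ with hi0
  set C : ℝ := ∑ i ∈ Finset.univ.erase i0, (t : ℝ) / dI (i.1 + 1) with hCdef
  have hC : 0 ≤ C := Finset.sum_nonneg fun i _ =>
    le_of_lt (div_pos (by exact_mod_cast ht) (dI_pos _))
  have hsplit0 : ∀ y : ℝ, Gfun t ρ y = (1 - ρ) * Real.exp ((1 - ρ) * y) / dI 1 +
      ∑ i ∈ Finset.univ.erase i0,
        (((i.1 + 1 : ℕ) : ℝ) - ρ) * Real.exp ((((i.1 + 1 : ℕ) : ℝ) - ρ) * y) / dI (i.1 + 1) := by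
    intro y
    rw [Gfun, ← Finset.add_sum_erase _ _ (Finset.mem_univ i0)]
    norm_num
  have hub : ∀ y : ℝ, y ≤ 0 → Gfun t ρ y ≤ (1 - ρ) * Real.exp ((1 - ρ) * y) / dI 1 + C := by
    intro y hy
    rw [hsplit0 y]
    refine add_le_add (le_refl _) (Finset.sum_le_sum fun i _ => ?_)
    refine term_upper (dI_pos _) hy ?_ (by positivity)
    have h1 : ((i.1 + 1 : ℕ) : ℝ) ≤ (t : ℝ) := by exact_mod_cast i.2
    linarith
  set s : ℝ := (C + 1) * dI 1 / (ρ - 1) with hsdef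
  have hs : 0 < s := div_pos (mul_pos (by linarith) (dI_pos 1)) (by linarith)
  set y₀ : ℝ := min (Real.log s / (1 - ρ)) 0 with hy₀def
  have hy₀0 : y₀ ≤ 0 := min_le_right _ _
  have h1 : Real.log s ≤ (1 - ρ) * y₀ := by
    have hm : (1 - ρ) * (Real.log s / (1 - ρ)) ≤ (1 - ρ) * y₀ :=
      mul_le_mul_of_nonpos_left (min_le_left _ _) (by linarith)
    have he : (1 - ρ) * (Real.log s / (1 - ρ)) = Real.log s := by
      rw [mul_comm, div_mul_cancel₀ _ (show (1:ℝ) - ρ ≠ 0 by linarith)]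
    linarith
  have h2 : s ≤ Real.exp ((1 - ρ) * y₀) := by
    calc s = Real.exp (Real.log s) := (Real.exp_log hs).symm
    _ ≤ _ := Real.exp_le_exp.mpr h1
  have h3 : (1 - ρ) * Real.exp ((1 - ρ) * y₀) / dI 1 ≤ -(C + 1) := by
    have hm : (1 - ρ) * Real.exp ((1 - ρ) * y₀) ≤ (1 - ρ) * s :=
      mul_le_mul_of_nonpos_left h2 (by linarith)
    have he : (ρ - 1) * s = (C + 1) * dI 1 := by
      rw [hsdef, mul_comm, div_mul_cancel₀ _ (show ρ - 1 ≠ 0 by linarith)]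
    rw [div_le_iff₀ (dI_pos 1)]
    have : (-(C + 1)) * dI 1 = -((C + 1) * dI 1) := by ring
    rw [this]
    linarith
  have hneg : Gfun t ρ y₀ < 0 := by
    have := hub y₀ hy₀0
    linarith
  -- upper side
  have htt : (t - 1) < t := by omega
  set il : Fin t := ⟨t - 1, htt⟩ with hildef
  have hil : (il.1 + 1 : ℕ) = t := by
    show t - 1 + 1 = t; omega
  have htρ : (0 : ℝ) < (t : ℝ) - ρ := by linarith
  set D : ℝ := ∑ i ∈ Finset.univ.erase il, ρ / dI (i.1 + 1) with hDdef
  have hD : 0 ≤ D := Finset.sum_nonneg fun i _ => le_of_lt (div_pos hρ0 (dI_pos _))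
  have hsplit1 : ∀ y : ℝ, Gfun t ρ y = ((t : ℝ) - ρ) * Real.exp (((t : ℝ) - ρ) * y) / dI t +
      ∑ i ∈ Finset.univ.erase il,
        (((i.1 + 1 : ℕ) : ℝ) - ρ) * Real.exp ((((i.1 + 1 : ℕ) : ℝ) - ρ) * y) / dI (i.1 + 1) := by
    intro y
    rw [Gfun, ← Finset.add_sum_erase _ _ (Finset.mem_univ il), hil]
  have hlb : ∀ y : ℝ, 0 ≤ y → ((t : ℝ) - ρ) * Real.exp (((t : ℝ) - ρ) * y) / dI t - D ≤ Gfun t ρ y := by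
    intro y hy
    rw [hsplit1 y]
    have : -D ≤ ∑ i ∈ Finset.univ.erase il,
        (((i.1 + 1 : ℕ) : ℝ) - ρ) * Real.exp ((((i.1 + 1 : ℕ) : ℝ) - ρ) * y) / dI (i.1 + 1) := by
      rw [hDdef, ← Finset.sum_neg_distrib]
      refine Finset.sum_le_sum fun i _ => ?_
      refine term_lower (dI_pos _) hy ?_ hρ0.le
      have h1 : (1 : ℝ) ≤ ((i.1 + 1 : ℕ) : ℝ) := by exact_mod_cast Nat.one_le_iff_ne_zero.mpr (by omega)
      linarith
    linarith
  set s' : ℝ := (D + 1) * dI t / ((t : ℝ) - ρ) with hs'def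
  have hs' : 0 < s' := div_pos (mul_pos (by linarith) (dI_pos t)) htρ
  set y₁ : ℝ := max (Real.log s' / ((t : ℝ) - ρ)) 0 with hy₁def
  have hy₁0 : 0 ≤ y₁ := le_max_right _ _
  have h1' : Real.log s' ≤ ((t : ℝ) - ρ) * y₁ := by
    have hm : ((t : ℝ) - ρ) * (Real.log s' / ((t : ℝ) - ρ)) ≤ ((t : ℝ) - ρ) * y₁ :=
      mul_le_mul_of_nonneg_left (le_max_left _ _) htρ.le
    have he : ((t : ℝ) - ρ) * (Real.log s' / ((t : ℝ) - ρ)) = Real.log s' := by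
      rw [mul_comm, div_mul_cancel₀ _ (show (t:ℝ) - ρ ≠ 0 by linarith)]
    linarith
  have h2' : s' ≤ Real.exp (((t : ℝ) - ρ) * y₁) := by
    calc s' = Real.exp (Real.log s') := (Real.exp_log hs').symm
    _ ≤ _ := Real.exp_le_exp.mpr h1'
  have h3' : (D + 1) ≤ ((t : ℝ) - ρ) * Real.exp (((t : ℝ) - ρ) * y₁) / dI t := by
    rw [le_div_iff₀ (dI_pos t)]
    have hm : ((t : ℝ) - ρ) * s' ≤ ((t : ℝ) - ρ) * Real.exp (((t : ℝ) - ρ) * y₁) :=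
      mul_le_mul_of_nonneg_left h2' htρ.le
    have he : ((t : ℝ) - ρ) * s' = (D + 1) * dI t := by
      rw [hs'def, mul_comm, div_mul_cancel₀ _ (show (t:ℝ) - ρ ≠ 0 by linarith)]
    linarith
  have hpos : 0 < Gfun t ρ y₁ := by
    have := hlb y₁ hy₁0
    linarith
  -- intermediate value
  have hlt : y₀ ≤ y₁ := le_of_lt ((Gfun_strictMono t ht ρ hρ1).lt_iff_lt.mp (by linarith))
  have hIcc := intermediate_value_Icc hlt (Gfun_cont t ρ).continuousOn
  have h0mem : (0 : ℝ) ∈ Set.Icc (Gfun t ρ y₀) (Gfun t ρ y₁) := ⟨hneg.le, hpos.le⟩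
  obtain ⟨y, -, hy⟩ := hIcc h0mem
  exact ⟨y, hy⟩

/-- Let `t` be a positive integer, `k > 0` real and `1 < ρ < t`.  Then
there are unique reals `x = x_t(ρ)`, `y = y_t(ρ)` with `Σ e^{x+iy}/d_i = 1` and
`Σ i e^{x+iy}/d_i = ρ`; the vector `p_i = e^{x+iy}/d_i` is the unique maximizer of
`L̃(ρ,k,·)` on `P̃_{ρ,t}`; and `L̃₀(ρ,k,t) = ρ log(ρk) − log k − ρ + 1 − x − ρy`. -/
theorem Ltilde_max (t : ℕ) (ht : 0 < t) (k ρ : ℝ) (hk : 0 < k) (hρ1 : 1 < ρ)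
    (hρt : ρ < (t : ℝ)) :
    ∃ x y : ℝ, ∃ pstar : Fin t → ℝ,
      pstar = (fun i => Real.exp (x + ((i.1 + 1 : ℕ) : ℝ) * y) / dI (i.1 + 1)) ∧
      (∑ i : Fin t, Real.exp (x + ((i.1 + 1 : ℕ) : ℝ) * y) / dI (i.1 + 1)) = 1 ∧
      (∑ i : Fin t, ((i.1 + 1 : ℕ) : ℝ) *
          Real.exp (x + ((i.1 + 1 : ℕ) : ℝ) * y) / dI (i.1 + 1)) = ρ ∧
      (∀ x' y' : ℝ,
        (∑ i : Fin t, Real.exp (x' + ((i.1 + 1 : ℕ) : ℝ) * y') / dI (i.1 + 1)) = 1 →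
        (∑ i : Fin t, ((i.1 + 1 : ℕ) : ℝ) *
            Real.exp (x' + ((i.1 + 1 : ℕ) : ℝ) * y') / dI (i.1 + 1)) = ρ →
        x' = x ∧ y' = y) ∧
      pstar ∈ Ptilde ρ t ∧
      (∀ q ∈ Ptilde ρ t, Ltilde ρ k q ≤ Ltilde ρ k pstar) ∧
      (∀ q ∈ Ptilde ρ t, Ltilde ρ k q = Ltilde ρ k pstar → q = pstar) ∧
      Ltilde0 ρ k t = ρ * Real.log (ρ * k) - Real.log k - ρ + 1 - x - ρ * y := by
  obtain ⟨y, hGy⟩ := Gfun_zero t ht ρ hρ1 hρt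
  have hne : Nonempty (Fin t) := ⟨⟨0, ht⟩⟩
  set S : ℝ := ∑ i : Fin t, Real.exp (((i.1 + 1 : ℕ) : ℝ) * y) / dI (i.1 + 1) with hSdef
  have hS : 0 < S :=
    Finset.sum_pos (fun i _ => div_pos (Real.exp_pos _) (dI_pos _)) Finset.univ_nonempty
  set x : ℝ := -Real.log S with hxdef
  have hex : Real.exp x = S⁻¹ := by rw [hxdef, Real.exp_neg, Real.exp_log hS]
  have hfac : ∀ x' y' : ℝ,
      (∑ i : Fin t, Real.exp (x' + ((i.1 + 1 : ℕ) : ℝ) * y') / dI (i.1 + 1)) =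
        Real.exp x' * ∑ i : Fin t, Real.exp (((i.1 + 1 : ℕ) : ℝ) * y') / dI (i.1 + 1) := by
    intro x' y'
    rw [Finset.mul_sum]
    exact Finset.sum_congr rfl fun i _ => by rw [Real.exp_add, mul_div_assoc]
  have hfac2 : ∀ x' y' : ℝ,
      (∑ i : Fin t, ((i.1 + 1 : ℕ) : ℝ) * Real.exp (x' + ((i.1 + 1 : ℕ) : ℝ) * y') / dI (i.1 + 1)) =
        Real.exp x' * ∑ i : Fin t, ((i.1 + 1 : ℕ) : ℝ) * Real.exp (((i.1 + 1 : ℕ) : ℝ) * y') / dI (i.1 + 1) := by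
    intro x' y'
    rw [Finset.mul_sum]
    refine Finset.sum_congr rfl fun i _ => ?_
    rw [Real.exp_add]; ring
  have hGrel : ∀ y' : ℝ,
      (∑ i : Fin t, ((i.1 + 1 : ℕ) : ℝ) * Real.exp (((i.1 + 1 : ℕ) : ℝ) * y') / dI (i.1 + 1)) =
        ρ * (∑ i : Fin t, Real.exp (((i.1 + 1 : ℕ) : ℝ) * y') / dI (i.1 + 1)) +
          Real.exp (ρ * y') * Gfun t ρ y' := by
    intro y'
    rw [Gfun, Finset.mul_sum, Finset.mul_sum, ← Finset.sum_add_distrib]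
    refine Finset.sum_congr rfl fun i _ => ?_
    rw [show (((i.1 + 1 : ℕ) : ℝ) - ρ) * y' = ((i.1 + 1 : ℕ) : ℝ) * y' - ρ * y' by ring,
      Real.exp_sub]
    have h2 : Real.exp (((i.1 + 1 : ℕ) : ℝ) * y') / Real.exp (ρ * y') * Real.exp (ρ * y') =
        Real.exp (((i.1 + 1 : ℕ) : ℝ) * y') := div_mul_cancel₀ _ (Real.exp_pos _).ne'
    linear_combination (-((((i.1 + 1 : ℕ) : ℝ) - ρ) / dI (i.1 + 1))) * h2
  have hsum2 : (∑ i : Fin t, ((i.1 + 1 : ℕ) : ℝ) * Real.exp (((i.1 + 1 : ℕ) : ℝ) * y) / dI (i.1 + 1))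
      = ρ * S := by
    rw [hGrel y, hGy, mul_zero, add_zero, ← hSdef]
  have eq1 : (∑ i : Fin t, Real.exp (x + ((i.1 + 1 : ℕ) : ℝ) * y) / dI (i.1 + 1)) = 1 := by
    rw [hfac x y, hex, ← hSdef, inv_mul_cancel₀ hS.ne']
  have eq2 : (∑ i : Fin t, ((i.1 + 1 : ℕ) : ℝ) * Real.exp (x + ((i.1 + 1 : ℕ) : ℝ) * y) / dI (i.1 + 1)) = ρ := by
    rw [hfac2 x y, hsum2, hex, mul_comm ρ S, ← mul_assoc, inv_mul_cancel₀ hS.ne', one_mul]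
  have huniq : ∀ x' y' : ℝ,
      (∑ i : Fin t, Real.exp (x' + ((i.1 + 1 : ℕ) : ℝ) * y') / dI (i.1 + 1)) = 1 →
      (∑ i : Fin t, ((i.1 + 1 : ℕ) : ℝ) * Real.exp (x' + ((i.1 + 1 : ℕ) : ℝ) * y') / dI (i.1 + 1)) = ρ →
      x' = x ∧ y' = y := by
    intro x' y' h1 h2
    rw [hfac x' y'] at h1
    rw [hfac2 x' y', hGrel y'] at h2
    have e3 : Real.exp x' * (Real.exp (ρ * y') * Gfun t ρ y') = 0 := by
      linear_combination h2 - ρ * h1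
    have hG0 : Gfun t ρ y' = 0 := by
      have hx0 : Real.exp x' ≠ 0 := (Real.exp_pos _).ne'
      have hr0 : Real.exp (ρ * y') ≠ 0 := (Real.exp_pos _).ne'
      rcases mul_eq_zero.mp e3 with h | h
      · exact absurd h hx0
      · rcases mul_eq_zero.mp h with h' | h'
        · exact absurd h' hr0
        · exact h'
    have hy' : y' = y := (Gfun_strictMono t ht ρ hρ1).injective (hG0.trans hGy.symm)
    subst hy'
    rw [← hSdef] at h1
    have hx' : Real.exp x' = Real.exp x := by
      rw [hex]
      exact eq_inv_of_mul_eq_one_left h1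
    exact ⟨Real.exp_eq_exp.mp hx', rfl⟩
  set pstar : Fin t → ℝ := fun i => Real.exp (x + ((i.1 + 1 : ℕ) : ℝ) * y) / dI (i.1 + 1) with hpdef
  have hppos : ∀ i, 0 < pstar i := fun i => div_pos (Real.exp_pos _) (dI_pos _)
  have hpsum : ∑ i, pstar i = 1 := by rw [hpdef]; exact eq1
  have hpsum2 : ∑ i, ((i.1 + 1 : ℕ) : ℝ) * pstar i = ρ := by
    rw [← eq2]
    exact Finset.sum_congr rfl fun i _ => by rw [hpdef, mul_div_assoc]
  have hmem : pstar ∈ Ptilde ρ t := by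
    refine ⟨fun i => ⟨(hppos i).le, ?_⟩, hpsum, hpsum2⟩
    calc pstar i ≤ ∑ j, pstar j :=
          Finset.single_le_sum (fun j _ => (hppos j).le) (Finset.mem_univ i)
    _ = 1 := hpsum
  have hlogpd : ∀ i : Fin t, Real.log (pstar i * dI (i.1 + 1)) = x + ((i.1 + 1 : ℕ) : ℝ) * y := by
    intro i
    rw [hpdef]
    simp only
    rw [div_mul_cancel₀ _ (dI_pos _).ne', Real.log_exp]
  have hpstar_sumlog : ∑ i, pstar i * Real.log (pstar i * dI (i.1 + 1)) = x + ρ * y := by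
    calc ∑ i, pstar i * Real.log (pstar i * dI (i.1 + 1))
        = ∑ i, (x * pstar i + y * (((i.1 + 1 : ℕ) : ℝ) * pstar i)) :=
          Finset.sum_congr rfl fun i _ => by rw [hlogpd i]; ring
    _ = x * (∑ i, pstar i) + y * (∑ i, ((i.1 + 1 : ℕ) : ℝ) * pstar i) := by
          rw [Finset.sum_add_distrib, ← Finset.mul_sum, ← Finset.mul_sum]
    _ = x + ρ * y := by rw [hpsum, hpsum2]; ring
  have hkey : ∀ q ∈ Ptilde ρ t, x + ρ * y ≤ (∑ i, q i * Real.log (q i * dI (i.1 + 1))) ∧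
      ((∑ i, q i * Real.log (q i * dI (i.1 + 1))) = x + ρ * y → q = pstar) := by
    intro q hq
    obtain ⟨hq01, hqs1, hqs2⟩ := hq
    set F : Fin t → ℝ := fun i => q i * Real.log (q i * dI (i.1 + 1)) -
      (x + ((i.1 + 1 : ℕ) : ℝ) * y) * q i - (q i - pstar i) with hFdef
    have hF0 : ∀ i, 0 ≤ F i ∧ (F i = 0 → q i = pstar i) := by
      intro i
      have hqi : 0 ≤ q i := (hq01 i).1
      have hlogp : Real.log (pstar i) = (x + ((i.1 + 1 : ℕ) : ℝ) * y) - Real.log (dI (i.1 + 1)) := by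
        have h := hlogpd i
        rw [Real.log_mul (hppos i).ne' (dI_pos _).ne'] at h
        linarith
      have hsplit : q i * Real.log (q i * dI (i.1 + 1)) =
          q i * Real.log (q i) + q i * Real.log (dI (i.1 + 1)) := by
        rcases eq_or_lt_of_le hqi with h | h
        · rw [← h]; simp
        · rw [Real.log_mul h.ne' (dI_pos _).ne']; ring
      have hE := entropy_term (hppos i) hqi
      have hFval : F i = q i * Real.log (q i) - (q i * Real.log (pstar i) + (q i - pstar i)) := by
        rw [hFdef]
        simp only
        rw [hsplit, hlogp]; ring
      constructor
      · rw [hFval]; linarith [hE.1]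
      · intro h; apply hE.2; rw [hFval] at h; linarith
    have h1 : ∑ i, (x + ((i.1 + 1 : ℕ) : ℝ) * y) * q i = x + ρ * y := by
      calc ∑ i, (x + ((i.1 + 1 : ℕ) : ℝ) * y) * q i
          = ∑ i, (x * q i + y * (((i.1 + 1 : ℕ) : ℝ) * q i)) :=
            Finset.sum_congr rfl fun i _ => by ring
      _ = x * (∑ i, q i) + y * (∑ i, ((i.1 + 1 : ℕ) : ℝ) * q i) := by
            rw [Finset.sum_add_distrib, ← Finset.mul_sum, ← Finset.mul_sum]
      _ = x + ρ * y := by rw [hqs1, hqs2]; ring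
    have hFsum : ∑ i, F i = (∑ i, q i * Real.log (q i * dI (i.1 + 1))) - (x + ρ * y) := by
      calc ∑ i, F i
          = (∑ i, q i * Real.log (q i * dI (i.1 + 1))) -
            (∑ i, (x + ((i.1 + 1 : ℕ) : ℝ) * y) * q i) - ((∑ i, q i) - ∑ i, pstar i) := by
            rw [hFdef]
            rw [Finset.sum_sub_distrib, Finset.sum_sub_distrib, Finset.sum_sub_distrib]
      _ = _ := by rw [h1, hqs1, hpsum]; ring
    constructor
    · have h2 := Finset.sum_nonneg (fun i (_ : i ∈ Finset.univ) => (hF0 i).1)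
      rw [hFsum] at h2
      linarith
    · intro h
      have hz : ∑ i, F i = 0 := by rw [hFsum, h]; ring
      have h3 := (Finset.sum_eq_zero_iff_of_nonneg (fun i _ => (hF0 i).1)).mp hz
      funext i
      exact (hF0 i).2 (h3 i (Finset.mem_univ i))
  have hmax : ∀ q ∈ Ptilde ρ t, Ltilde ρ k q ≤ Ltilde ρ k pstar := by
    intro q hq
    have h := (hkey q hq).1
    unfold Ltilde
    rw [hpstar_sumlog]
    linarith
  have hmaxu : ∀ q ∈ Ptilde ρ t, Ltilde ρ k q = Ltilde ρ k pstar → q = pstar := by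
    intro q hq h
    apply (hkey q hq).2
    unfold Ltilde at h
    rw [hpstar_sumlog] at h
    linarith
  have hLp : Ltilde ρ k pstar = ρ * Real.log (ρ * k) - Real.log k - ρ + 1 - x - ρ * y := by
    unfold Ltilde
    rw [hpstar_sumlog]
    ring
  have hsup : Ltilde0 ρ k t = Ltilde ρ k pstar := by
    refine IsGreatest.csSup_eq ⟨⟨pstar, hmem, rfl⟩, ?_⟩
    rintro L ⟨q, hq, rfl⟩
    exact hmax q hq
  exact ⟨x, y, pstar, hpdef, eq1, eq2, huniq, hmem, hmax, hmaxu, by rw [hsup, hLp]⟩
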